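/- For the twist link polynomial Γ⁻(λ)[L_{j,k}] = λ⁰ + λ^{-|j-k|}, two twist links L_{j,k} and L_{j',k'} with j+k = j'+k' (so topologically equivalent) have equal polynomials if and only if |j-k| = |j'-k'|. Consequently, for m ≥ 2 the links L_{1,m-1}, L_{2,m-2}, …, L_{⌊m/2⌋, m-⌊m/2⌋} are pairwise distinguished by this polynomial. -/

import Mathlib

open LaurentPolynomial

theorem LaurentPolynomial.T_injective {R : Type*} [Semiring R] [Nontrivial R] :
    Function.Injective (T : ℤ → R[T;T⁻¹]) := by
  intro m n h
  simpa using congrArg (fun p : R[T;T⁻¹] => p.coeff n) h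

theorem abs_sub_sub_self_eq_iff {a b m : ℤ} (ha : 2 * a ≤ m) (hb : 2 * b ≤ m) :
    |a - (m - a)| = |b - (m - b)| ↔ a = b := by
  rw [abs_of_nonpos (by omega), abs_of_nonpos (by omega)]
  omega

/-- with `Γ⁻(λ)[L_{j,k}] = λ⁰ + λ^{-|j-k|}`, topologically equivalent twist links
(`j+k = j'+k'`) have equal polynomials iff `|j-k| = |j'-k'|`; consequently for `m ≥ 2` the links
`L_{a, m-a}` for `1 ≤ a ≤ ⌊m/2⌋` are pairwise distinguished by the polynomial. -/
theorem stmt_4 :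
    let Γ : ℤ → ℤ → LaurentPolynomial ℤ := fun j k => T 0 + T (-|j - k|)
    (∀ j k j' k' : ℤ, 0 < j → 0 < k → 0 < j' → 0 < k' → j + k = j' + k' →
      (Γ j k = Γ j' k' ↔ |j - k| = |j' - k'|)) ∧
    (∀ m : ℤ, 2 ≤ m → ∀ a b : ℤ, 1 ≤ a → 2 * a ≤ m → 1 ≤ b → 2 * b ≤ m →
      (Γ a (m - a) = Γ b (m - b) ↔ a = b)) := by
  intro Γ
  have hΓ (j k j' k' : ℤ) : Γ j k = Γ j' k' ↔ |j - k| = |j' - k'| :=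
    (add_right_inj _).trans (T_injective.eq_iff.trans neg_inj)
  exact ⟨fun j k j' k' _ _ _ _ _ => hΓ j k j' k',
    fun m _ a b _ ham _ hbm => (hΓ _ _ _ _).trans (abs_sub_sub_self_eq_iff ham hbm)⟩
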